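/- Let H ∈ H(μ,ν,λ) be an h-array with the standard boundary. Then H is a hive (satisfies RC(1), RC(2), RC(3)) if and only if T2(H) is a GZ scheme in GZ(ν, λ-μ, μ); that is, T2(H) is a GT pattern of type ν, weight λ-μ, and satisfies the exponent bounds ε_j^{(i)}(T2(H)) ≤ μ_i - μ_{i+1} for all i, j. -/

import Mathlib

/-!
The three families of rhombus inequalities match the three families of conditions on `T2(H)`
one for one: the entries of `T2(H)` are vertical differences `h_{j,i} - h_{j-1,i}` of the hive,
so IC(1) is RC(1) and IC(2) is RC(3), while the sum defining `ε_j^(i)` telescopes down the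
column to the RC(2) rhombus at `(j, i)` plus the second difference `μ_{i+1} - μ_i` of the top
boundary. The type and weight of `T2(H)` are forced by the boundary values alone.
-/

open Finset

/-- Interlacing condition IC(1): `t_j^(i+1) ≥ t_j^(i)` for `1 ≤ j ≤ i ≤ n-1`. -/
def IsIC1 (n : ℕ) (t : ℕ → ℕ → ℤ) : Prop :=
  ∀ i j : ℕ, 1 ≤ j → j ≤ i → i + 1 ≤ n → t i j ≤ t (i + 1) j

/-- Interlacing condition IC(2): `t_j^(i) ≥ t_{j+1}^(i+1)`. -/
def IsIC2 (n : ℕ) (t : ℕ → ℕ → ℤ) : Prop :=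
  ∀ i j : ℕ, 1 ≤ j → j ≤ i → i + 1 ≤ n → t (i + 1) (j + 1) ≤ t i j

/-- Rhombus condition RC(1): `h_{a,b} + h_{a-1,b-1} ≥ h_{a-1,b} + h_{a,b-1}` for `1 ≤ a < b ≤ n`. -/
def IsRC1 (n : ℕ) (h : ℕ → ℕ → ℤ) : Prop :=
  ∀ a b : ℕ, 1 ≤ a → a < b → b ≤ n →
    h (a - 1) b + h a (b - 1) ≤ h a b + h (a - 1) (b - 1)

/-- Rhombus condition RC(2): `h_{a-1,b} + h_{a,b} ≥ h_{a,b+1} + h_{a-1,b-1}` for `1 ≤ a ≤ b < n`. -/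
def IsRC2 (n : ℕ) (h : ℕ → ℕ → ℤ) : Prop :=
  ∀ a b : ℕ, 1 ≤ a → a ≤ b → b < n →
    h a (b + 1) + h (a - 1) (b - 1) ≤ h (a - 1) b + h a b

/-- Rhombus condition RC(3): `h_{a,b} + h_{a,b+1} ≥ h_{a+1,b+1} + h_{a-1,b}` for `1 ≤ a ≤ b < n`. -/
def IsRC3 (n : ℕ) (h : ℕ → ℕ → ℤ) : Prop :=
  ∀ a b : ℕ, 1 ≤ a → a ≤ b → b < n →
    h (a + 1) (b + 1) + h (a - 1) b ≤ h a b + h a (b + 1)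

/-- First derived t-array `T1`: `x_{b+1-a}^{(n-a)} = h_{a,b+1} - h_{a,b}`,
so `x_j^(i) = h_{n-i, n-i+j} - h_{n-i, n-i+j-1}`. -/
def dT1 (n : ℕ) (h : ℕ → ℕ → ℤ) (i j : ℕ) : ℤ :=
  h (n - i) (n - i + j) - h (n - i) (n - i + j - 1)

/-- Second derived t-array `T2`: `y_{a+1}^{(b+1)} = h_{a+1,b+1} - h_{a,b+1}`,
so `y_j^(i) = h_{j,i} - h_{j-1,i}`. -/
def dT2 (h : ℕ → ℕ → ℤ) (i j : ℕ) : ℤ :=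
  h j i - h (j - 1) i

/-- Third derived t-array `T3`: `z_{a+1}^{(n+a-b)} = h_{a+1,b+1} - h_{a,b}`,
so `z_j^(i) = h_{j, n+j-i} - h_{j-1, n+j-1-i}`. -/
def dT3 (n : ℕ) (h : ℕ → ℕ → ℤ) (i j : ℕ) : ℤ :=
  h j (n + j - i) - h (j - 1) (n + j - 1 - i)

/-- The dual t-array: `s_j^(i) = -t_{i+1-j}^(i)`. -/
def dualT (t : ℕ → ℕ → ℤ) (i j : ℕ) : ℤ := - t i (i + 1 - j)

/-- The weight of a t-array: `w_i = Σ_{k=1}^i t_k^(i) - Σ_{k=1}^{i-1} t_k^(i-1)`. -/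
def wt (t : ℕ → ℕ → ℤ) (i : ℕ) : ℤ :=
  (∑ k ∈ Finset.Icc 1 i, t i k) - ∑ k ∈ Finset.Icc 1 (i - 1), t (i - 1) k

/-- The Gelfand–Zelevinsky exponent
`ε_j^(i)(T) = Σ_{1 ≤ h < j} (t_h^(i+1) - 2 t_h^(i) + t_h^(i-1)) + (t_j^(i+1) - t_j^(i))`. -/
def expo (t : ℕ → ℕ → ℤ) (i j : ℕ) : ℤ :=
  (∑ h ∈ Finset.Icc 1 (j - 1), (t (i + 1) h - 2 * t i h + t (i - 1) h)) +
    (t (i + 1) j - t i j)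

/-- Boundary conditions for an h-array in `H(μ,ν,λ)`. -/
def IsBoundary (n : ℕ) (mu nu lam : ℕ → ℤ) (h : ℕ → ℕ → ℤ) : Prop :=
  h 0 0 = 0 ∧
  (∀ i, 1 ≤ i → i ≤ n → h 0 i = ∑ k ∈ Finset.Icc 1 i, mu k) ∧
  (∀ i, 1 ≤ i → i ≤ n →
    h i n = (∑ k ∈ Finset.Icc 1 n, mu k) + ∑ k ∈ Finset.Icc 1 i, nu k) ∧
  (∀ i, 1 ≤ i → i ≤ n → h i i = ∑ k ∈ Finset.Icc 1 i, lam k)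

/-- A weakly decreasing sequence of nonnegative integers of length `n`
(a polynomial dominant weight). -/
def IsDomWeight (n : ℕ) (mu : ℕ → ℤ) : Prop :=
  (∀ i, 1 ≤ i → i + 1 ≤ n → mu (i + 1) ≤ mu i) ∧ (∀ i, 1 ≤ i → i ≤ n → 0 ≤ mu i)

section Telescope

variable {M : Type*} [AddCommGroup M]

theorem sum_Icc_one_sub_pred (f : ℕ → M) (m : ℕ) :
    ∑ k ∈ Icc 1 m, (f k - f (k - 1)) = f m - f 0 := by
  induction m with
  | zero => simp
  | succ m ih =>
    rw [sum_Icc_succ_top (by omega), ih, Nat.add_sub_cancel]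
    abel

theorem sum_Icc_one_sub_sum_Icc_one_pred (f : ℕ → M) {m : ℕ} (hm : 1 ≤ m) :
    ∑ k ∈ Icc 1 m, f k - ∑ k ∈ Icc 1 (m - 1), f k = f m := by
  obtain ⟨m, rfl⟩ := Nat.exists_eq_add_of_le' hm
  rw [sum_Icc_succ_top (by omega), Nat.add_sub_cancel]
  abel

end Telescope

section DerivedArray

theorem sum_Icc_dT2 (h : ℕ → ℕ → ℤ) (i m : ℕ) :
    ∑ k ∈ Icc 1 m, dT2 h i k = h m i - h 0 i :=
  sum_Icc_one_sub_pred (fun k => h k i) m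

theorem expo_dT2 (h : ℕ → ℕ → ℤ) (i j : ℕ) :
    expo (dT2 h) i j =
      (h j (i + 1) + h (j - 1) (i - 1) - h (j - 1) i - h j i) -
        (h 0 (i + 1) - 2 * h 0 i + h 0 (i - 1)) := by
  have hsum : ∑ k ∈ Icc 1 (j - 1), (dT2 h (i + 1) k - 2 * dT2 h i k + dT2 h (i - 1) k) =
      (h (j - 1) (i + 1) - h 0 (i + 1)) - 2 * (h (j - 1) i - h 0 i) +
        (h (j - 1) (i - 1) - h 0 (i - 1)) := by
    simp only [sum_add_distrib, sum_sub_distrib, ← mul_sum, sum_Icc_dT2]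
  rw [expo, hsum, dT2, dT2]
  ring

variable {n : ℕ} {h : ℕ → ℕ → ℤ}

theorem isIC1_dT2_iff : IsIC1 n (dT2 h) ↔ IsRC1 n h := by
  constructor
  · intro hic a b ha hab hbn
    obtain ⟨c, rfl⟩ := Nat.exists_eq_add_of_le' (by omega : 1 ≤ b)
    have := hic c a ha (by omega) hbn
    simp only [dT2, Nat.add_sub_cancel] at this ⊢
    linarith
  · intro hrc i j hj hji hin
    have := hrc j (i + 1) hj (by omega) hin
    simp only [dT2, Nat.add_sub_cancel] at this ⊢
    linarith

theorem isIC2_dT2_iff : IsIC2 n (dT2 h) ↔ IsRC3 n h := by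
  constructor
  · intro hic a b ha hab hbn
    have := hic b a ha hab hbn
    simp only [dT2, Nat.add_sub_cancel] at this
    linarith
  · intro hrc i j hj hji hin
    have := hrc j i hj hji hin
    simp only [dT2, Nat.add_sub_cancel]
    linarith

end DerivedArray

namespace IsBoundary

variable {n : ℕ} {mu nu lam : ℕ → ℤ} {h : ℕ → ℕ → ℤ}

theorem apply_zero_left (hbd : IsBoundary n mu nu lam h) {i : ℕ} (hin : i ≤ n) :
    h 0 i = ∑ k ∈ Icc 1 i, mu k := by
  rcases Nat.eq_zero_or_pos i with rfl | hi
  · simpa using hbd.1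
  · exact hbd.2.1 i hi hin

theorem apply_right (hbd : IsBoundary n mu nu lam h) {i : ℕ} (hin : i ≤ n) :
    h i n = ∑ k ∈ Icc 1 n, mu k + ∑ k ∈ Icc 1 i, nu k := by
  rcases Nat.eq_zero_or_pos i with rfl | hi
  · simpa using hbd.apply_zero_left le_rfl
  · exact hbd.2.2.1 i hi hin

theorem apply_diag (hbd : IsBoundary n mu nu lam h) {i : ℕ} (hin : i ≤ n) :
    h i i = ∑ k ∈ Icc 1 i, lam k := by
  rcases Nat.eq_zero_or_pos i with rfl | hi
  · simpa using hbd.1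
  · exact hbd.2.2.2 i hi hin

theorem dT2_top (hbd : IsBoundary n mu nu lam h) {j : ℕ} (hj : 1 ≤ j) (hjn : j ≤ n) :
    dT2 h n j = nu j := by
  rw [dT2, hbd.apply_right hjn, hbd.apply_right (by omega),
    ← sum_Icc_one_sub_sum_Icc_one_pred nu hj]
  ring

theorem wt_dT2 (hbd : IsBoundary n mu nu lam h) {i : ℕ} (hi : 1 ≤ i) (hin : i ≤ n) :
    wt (dT2 h) i = lam i - mu i := by
  rw [wt, sum_Icc_dT2, sum_Icc_dT2, hbd.apply_diag hin, hbd.apply_diag (by omega),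
    hbd.apply_zero_left hin, hbd.apply_zero_left (by omega),
    ← sum_Icc_one_sub_sum_Icc_one_pred lam hi, ← sum_Icc_one_sub_sum_Icc_one_pred mu hi]
  ring

theorem second_diff_zero_left (hbd : IsBoundary n mu nu lam h) {i : ℕ} (hi : 1 ≤ i)
    (hin : i + 1 ≤ n) :
    h 0 (i + 1) - 2 * h 0 i + h 0 (i - 1) = mu (i + 1) - mu i := by
  have hsucc := sum_Icc_one_sub_sum_Icc_one_pred mu (Nat.le_add_left 1 i)
  rw [Nat.add_sub_cancel] at hsucc
  rw [hbd.apply_zero_left hin, hbd.apply_zero_left (by omega), hbd.apply_zero_left (by omega),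
    ← hsucc, ← sum_Icc_one_sub_sum_Icc_one_pred mu hi]
  ring

theorem expo_dT2_le_iff_isRC2 (hbd : IsBoundary n mu nu lam h) :
    (∀ i j, 1 ≤ j → j ≤ i → i + 1 ≤ n → expo (dT2 h) i j ≤ mu i - mu (i + 1)) ↔
      IsRC2 n h := by
  have hexpo : ∀ i j, 1 ≤ j → j ≤ i → i + 1 ≤ n → expo (dT2 h) i j =
      mu i - mu (i + 1) + (h j (i + 1) + h (j - 1) (i - 1) - h (j - 1) i - h j i) :=
    fun i j hj hji hin => by
      rw [expo_dT2, hbd.second_diff_zero_left (by omega) hin]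
      ring
  constructor
  · intro hle a b ha hab hbn
    have := hle b a ha hab hbn
    rw [hexpo b a ha hab hbn] at this
    linarith
  · intro hrc i j hj hji hin
    have := hrc j i hj hji hin
    rw [hexpo i j hj hji hin]
    linarith

end IsBoundary

theorem hive_iff_dT2_GZ_general (n : ℕ) (mu nu lam : ℕ → ℤ) (h : ℕ → ℕ → ℤ)
    (hbd : IsBoundary n mu nu lam h) :
    (IsRC1 n h ∧ IsRC2 n h ∧ IsRC3 n h) ↔
      (IsIC1 n (dT2 h) ∧ IsIC2 n (dT2 h) ∧
        (∀ j, 1 ≤ j → j ≤ n → dT2 h n j = nu j) ∧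
        (∀ i, 1 ≤ i → i ≤ n → wt (dT2 h) i = lam i - mu i) ∧
        (∀ i j, 1 ≤ j → j ≤ i → i + 1 ≤ n →
          expo (dT2 h) i j ≤ mu i - mu (i + 1))) := by
  have htype : ∀ j, 1 ≤ j → j ≤ n → dT2 h n j = nu j := fun _ => hbd.dT2_top
  have hweight : ∀ i, 1 ≤ i → i ≤ n → wt (dT2 h) i = lam i - mu i := fun _ => hbd.wt_dT2
  rw [isIC1_dT2_iff, isIC2_dT2_iff, hbd.expo_dT2_le_iff_isRC2]
  tauto

/-- Theorem 3.2 (2): `H ∈ H(μ,ν,λ)` is a hive iff `T2(H)` is a GZ scheme in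
`GZ(ν, λ-μ, μ)`, i.e. a GT pattern of type `ν`, weight `λ-μ`, with exponents
bounded by `μ_i - μ_{i+1}`. -/
theorem hive_iff_dT2_GZ (n : ℕ) (mu nu lam : ℕ → ℤ) (h : ℕ → ℕ → ℤ)
    (hmu : IsDomWeight n mu) (hnu : IsDomWeight n nu) (hlam : IsDomWeight n lam)
    (hbd : IsBoundary n mu nu lam h) :
    (IsRC1 n h ∧ IsRC2 n h ∧ IsRC3 n h) ↔
      (IsIC1 n (dT2 h) ∧ IsIC2 n (dT2 h) ∧
        (∀ j, 1 ≤ j → j ≤ n → dT2 h n j = nu j) ∧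
        (∀ i, 1 ≤ i → i ≤ n → wt (dT2 h) i = lam i - mu i) ∧
        (∀ i j, 1 ≤ j → j ≤ i → i + 1 ≤ n →
          expo (dT2 h) i j ≤ mu i - mu (i + 1))) :=
  hive_iff_dT2_GZ_general n mu nu lam h hbd
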